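/- arXiv:0902.0349 — 3 statements merged into one kernel-verified Lean document; each statement's English description precedes it below -/
import Mathlib

section
/- Let R be a Noetherian commutative ring and let F• be a cochain complex of R-modules, bounded above, such that every cohomology module H^i(F•) is finitely generated. Then F• contains a subcomplex F_c• ⊆ F• whose terms are finitely generated R-modules and such that the inclusion F_c• → F• is a quasi-isomorphism. -/
/-!
Choose finitely generated submodules `A i` of the cycles that generate the cohomology, and build
the subcomplex downward from the degree `N` beyond which `F•` vanishes: `M i = A i + C i`, where
`C i` is finitely generated with `d (C i) = M (i + 1) ∩ im d`. That intersection is finitely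
generated because `R` is Noetherian, so the recursion stays within finitely generated modules.
The `A i` make the inclusion surjective on cohomology, the `C i` make it injective.
-/

open CategoryTheory CategoryTheory.Limits

namespace Submodule

variable {R M N : Type*}

theorem exists_fg_map_eq_of_le_range [Semiring R] [AddCommMonoid M] [Module R M]
    [AddCommMonoid N] [Module R N] (f : M →ₗ[R] N) {T : Submodule R N} (hT : T.FG)
    (hle : T ≤ LinearMap.range f) : ∃ C : Submodule R M, C.FG ∧ C.map f = T := by
  obtain ⟨s, rfl⟩ := hT
  choose g hg using fun x : s ↦ hle (subset_span x.2)
  refine ⟨span R (Set.range g), fg_span (Set.finite_range g), ?_⟩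
  rw [map_span, ← Set.range_comp]
  congr
  ext x
  simp [hg]

variable [Ring R] [AddCommGroup M] [Module R M] [AddCommGroup N] [Module R N]

theorem exists_fg_sup_eq_top (P : Submodule R M) [Module.Finite R (M ⧸ P)] :
    ∃ A : Submodule R M, A.FG ∧ P ⊔ A = ⊤ := by
  obtain ⟨A, hA, hmap⟩ := exists_fg_map_eq_of_le_range P.mkQ Module.Finite.fg_top
    (range_mkQ P).ge
  exact ⟨A, hA, (map_mkQ_eq_top _ _).mp hmap⟩

theorem exists_fg_map_eq_inf_range [IsNoetherianRing R] (f : M →ₗ[R] N) {W : Submodule R N}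
    (hW : W.FG) : ∃ C : Submodule R M, C.FG ∧ C.map f = W ⊓ LinearMap.range f :=
  exists_fg_map_eq_of_le_range f (hW.of_le inf_le_left) inf_le_right

end Submodule

namespace CategoryTheory.ShortComplex

variable {R : Type*} [Ring R]

theorem moduleCat_exists_fg_le_ker_sup_range (S : ShortComplex (ModuleCat R))
    [Module.Finite R S.homology] :
    ∃ A : Submodule R S.X₂, A.FG ∧ A ≤ LinearMap.ker S.g.hom ∧
      LinearMap.ker S.g.hom ≤ A ⊔ LinearMap.range S.f.hom := by
  have : Module.Finite R (LinearMap.ker S.g.hom ⧸ LinearMap.range S.moduleCatToCycles) :=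
    Module.Finite.equiv S.moduleCatHomologyIso.toLinearEquiv
  obtain ⟨A, hA, hsup⟩ := Submodule.exists_fg_sup_eq_top (LinearMap.range S.moduleCatToCycles)
  refine ⟨A.map (LinearMap.ker S.g.hom).subtype, hA.map _, Submodule.map_subtype_le _ _,
    fun x hx ↦ ?_⟩
  have hmem : (⟨x, hx⟩ : LinearMap.ker S.g.hom) ∈ LinearMap.range S.moduleCatToCycles ⊔ A := by
    simp [hsup]
  have := Submodule.mem_map_of_mem (f := (LinearMap.ker S.g.hom).subtype) hmem
  rwa [Submodule.map_sup, ← LinearMap.range_comp, sup_comm] at this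

theorem moduleCat_quasiIso_of {S₁ S₂ : ShortComplex (ModuleCat R)} (ψ : S₁ ⟶ S₂)
    (hsurj : ∀ x ∈ LinearMap.ker S₂.g.hom, ∃ y ∈ LinearMap.ker S₁.g.hom,
      ψ.τ₂ y - x ∈ LinearMap.range S₂.f.hom)
    (hinj : ∀ y ∈ LinearMap.ker S₁.g.hom, ψ.τ₂ y ∈ LinearMap.range S₂.f.hom →
      y ∈ LinearMap.range S₁.f.hom) :
    QuasiIso ψ := by
  have hK : ∀ y ∈ LinearMap.ker S₁.g.hom, ψ.τ₂ y ∈ LinearMap.ker S₂.g.hom := fun y hy ↦ by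
    simp_all [LinearMap.mem_ker, ← ModuleCat.comp_apply, ψ.comm₂₃]
  let φK := ψ.τ₂.hom.restrict hK
  have hcomm : φK ∘ₗ S₁.moduleCatToCycles = S₂.moduleCatToCycles ∘ₗ ψ.τ₁.hom := by
    ext w
    exact (ConcreteCategory.congr_hom ψ.comm₁₂ w).symm
  have hB : LinearMap.range S₁.moduleCatToCycles ≤
      (LinearMap.range S₂.moduleCatToCycles).comap φK := by
    rintro _ ⟨w, rfl⟩
    exact ⟨ψ.τ₁ w, congr($hcomm w).symm⟩
  let φH := Submodule.mapQ _ _ φK hB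
  let γ : LeftHomologyMapData ψ S₁.moduleCatLeftHomologyData S₂.moduleCatLeftHomologyData :=
    { φK := ModuleCat.ofHom φK
      φH := ModuleCat.ofHom φH
      commf' := by ext w; exact congr($hcomm w) }
  rw [γ.quasiIso_iff, ConcreteCategory.isIso_iff_bijective]
  constructor
  · rw [injective_iff_map_eq_zero]
    intro a ha
    obtain ⟨⟨y, hy⟩, rfl⟩ := Submodule.Quotient.mk_surjective _ a
    obtain ⟨z, hz⟩ := (Submodule.Quotient.mk_eq_zero _).mp ha
    obtain ⟨w, hw⟩ := hinj y hy ⟨z, congr($hz.1)⟩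
    exact (Submodule.Quotient.mk_eq_zero _).mpr ⟨w, Subtype.ext hw⟩
  · intro a
    obtain ⟨⟨x, hx⟩, rfl⟩ := Submodule.Quotient.mk_surjective _ a
    obtain ⟨y, hy, z, hz⟩ := hsurj x hx
    exact ⟨Submodule.Quotient.mk ⟨y, hy⟩, (Submodule.Quotient.eq _).mpr ⟨z, Subtype.ext hz⟩⟩

end CategoryTheory.ShortComplex

namespace CochainComplex

variable {R : Type*} [Ring R]

theorem moduleCat_quasiIso_of {G K : CochainComplex (ModuleCat R) ℤ} (φ : G ⟶ K)
    (hsurj : ∀ i, ∀ x ∈ LinearMap.ker (K.d (i + 1) (i + 1 + 1)).hom,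
      ∃ y ∈ LinearMap.ker (G.d (i + 1) (i + 1 + 1)).hom,
        φ.f (i + 1) y - x ∈ LinearMap.range (K.d i (i + 1)).hom)
    (hinj : ∀ i, ∀ y ∈ LinearMap.ker (G.d (i + 1) (i + 1 + 1)).hom,
      φ.f (i + 1) y ∈ LinearMap.range (K.d i (i + 1)).hom →
        y ∈ LinearMap.range (G.d i (i + 1)).hom) :
    QuasiIso φ := by
  refine (quasiIso_iff φ).mpr fun i ↦ ?_
  obtain ⟨j, rfl⟩ : ∃ j, i = j + 1 := ⟨i - 1, by omega⟩
  rw [quasiIsoAt_iff' _ j (j + 1) (j + 1 + 1) (by simp) (by simp)]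
  exact ShortComplex.moduleCat_quasiIso_of _ (hsurj j) (hinj j)

variable (K : CochainComplex (ModuleCat R) ℤ)

section OfSubmodules

variable (M : ∀ i, Submodule R (K.X i)) (hM : ∀ i, M i ≤ (M (i + 1)).comap (K.d i (i + 1)).hom)

noncomputable def ofSubmodules : CochainComplex (ModuleCat R) ℤ :=
  of (fun i ↦ ModuleCat.of R (M i)) (fun i ↦ ModuleCat.ofHom ((K.d i (i + 1)).hom.restrict (hM i)))
    fun i ↦ by ext x; exact congr($(K.d_comp_d i (i + 1) (i + 1 + 1)) x.1)

lemma ofSubmodules_d (i : ℤ) :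
    (ofSubmodules K M hM).d i (i + 1) = ModuleCat.ofHom ((K.d i (i + 1)).hom.restrict (hM i)) :=
  of_d (fun i ↦ ModuleCat.of R (M i))
    (fun i ↦ ModuleCat.ofHom ((K.d i (i + 1)).hom.restrict (hM i))) i

noncomputable def ofSubmodulesι : ofSubmodules K M hM ⟶ K where
  f i := ModuleCat.ofHom (M i).subtype
  comm' i j hij := by
    obtain rfl : i + 1 = j := hij
    rw [ofSubmodules_d]
    rfl

lemma ofSubmodulesι_f_injective (i : ℤ) : Function.Injective ((ofSubmodulesι K M hM).f i) :=
  Subtype.coe_injective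

lemma range_ofSubmodulesι_f (i : ℤ) : LinearMap.range ((ofSubmodulesι K M hM).f i).hom = M i :=
  Submodule.range_subtype _

lemma ofSubmodulesι_f_d_apply (i j : ℤ) (y : (ofSubmodules K M hM).X i) :
    (ofSubmodulesι K M hM).f j ((ofSubmodules K M hM).d i j y) =
      K.d i j ((ofSubmodulesι K M hM).f i y) :=
  (ConcreteCategory.congr_hom ((ofSubmodulesι K M hM).comm i j) y).symm

theorem quasiIso_ofSubmodulesι
    (hcycles : ∀ i, LinearMap.ker (K.d (i + 1) (i + 1 + 1)).hom ≤
      M (i + 1) ⊔ LinearMap.range (K.d i (i + 1)).hom)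
    (hboundaries : ∀ i, M (i + 1) ⊓ LinearMap.range (K.d i (i + 1)).hom ≤
      (M i).map (K.d i (i + 1)).hom) :
    QuasiIso (ofSubmodulesι K M hM) := by
  apply moduleCat_quasiIso_of
  · intro i x hx
    obtain ⟨m, hm, b, ⟨z, rfl⟩, rfl⟩ := Submodule.mem_sup.mp (hcycles i hx)
    rw [← range_ofSubmodulesι_f K M hM] at hm
    obtain ⟨y, rfl⟩ := hm
    have hdd : K.d (i + 1) (i + 1 + 1) (K.d i (i + 1) z) = 0 :=
      congr($(K.d_comp_d i (i + 1) (i + 1 + 1)) z)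
    refine ⟨y, ofSubmodulesι_f_injective K M hM _ ?_, -z, by simp⟩
    simpa [ofSubmodulesι_f_d_apply, hdd] using hx
  · rintro i y - ⟨z, hz⟩
    obtain ⟨w, hw, hwy⟩ := hboundaries i ⟨range_ofSubmodulesι_f K M hM _ ▸ ⟨y, rfl⟩, z, hz⟩
    rw [← range_ofSubmodulesι_f K M hM] at hw
    obtain ⟨w, rfl⟩ := hw
    refine ⟨w, ofSubmodulesι_f_injective K M hM _ ?_⟩
    simpa [ofSubmodulesι_f_d_apply] using hwy

end OfSubmodules

theorem exists_fg_le_ker_sup_range (i : ℤ) [Module.Finite R (K.homology i)] :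
    ∃ A : Submodule R (K.X i), A.FG ∧ A ≤ LinearMap.ker (K.d i (i + 1)).hom ∧
      LinearMap.ker (K.d i (i + 1)).hom ≤ A ⊔ LinearMap.range (K.d (i - 1) i).hom :=
  have : Module.Finite R (K.sc' (i - 1) i (i + 1)).homology :=
    .equiv (K.homologyIsoSc' _ _ _ (by simp) (by simp)).toLinearEquiv
  (K.sc' (i - 1) i (i + 1)).moduleCat_exists_fg_le_ker_sup_range

section FGSubcomplex

variable [IsNoetherianRing R] (N : ℤ) (A : ∀ i, Submodule R (K.X i)) (hA : ∀ i, (A i).FG)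

noncomputable def fgSubcomplexTerm (i : ℤ) : {W : Submodule R (K.X i) // W.FG} :=
  if _h : N ≤ i then ⟨⊥, Submodule.fg_bot⟩ else
    have hC := Submodule.exists_fg_map_eq_inf_range (K.d i (i + 1)).hom
      (fgSubcomplexTerm (i + 1)).2
    ⟨A i ⊔ hC.choose, (hA i).sup hC.choose_spec.1⟩
termination_by (N - i).toNat

lemma fgSubcomplexTerm_of_le {i : ℤ} (h : N ≤ i) : (fgSubcomplexTerm K N A hA i).1 = ⊥ := by
  rw [fgSubcomplexTerm, dif_pos h]

lemma fgSubcomplexTerm_of_lt {i : ℤ} (h : i < N) : ∃ C : Submodule R (K.X i),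
    (fgSubcomplexTerm K N A hA i).1 = A i ⊔ C ∧
      C.map (K.d i (i + 1)).hom = (fgSubcomplexTerm K N A hA (i + 1)).1 ⊓
        LinearMap.range (K.d i (i + 1)).hom := by
  rw [fgSubcomplexTerm, dif_neg h.not_ge]
  exact ⟨_, rfl, (Submodule.exists_fg_map_eq_inf_range _
    (fgSubcomplexTerm K N A hA (i + 1)).2).choose_spec.2⟩

lemma fgSubcomplexTerm_le_comap (hAker : ∀ i, A i ≤ LinearMap.ker (K.d i (i + 1)).hom) (i : ℤ) :
    (fgSubcomplexTerm K N A hA i).1 ≤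
      (fgSubcomplexTerm K N A hA (i + 1)).1.comap (K.d i (i + 1)).hom := by
  by_cases h : N ≤ i
  · simp [fgSubcomplexTerm_of_le K N A hA h]
  obtain ⟨C, hT, hC⟩ := fgSubcomplexTerm_of_lt K N A hA (not_le.mp h)
  rw [hT, sup_le_iff, ← Submodule.map_le_iff_le_comap (p := C), hC]
  exact ⟨(hAker i).trans (LinearMap.ker_le_comap _), inf_le_left⟩

lemma ker_le_fgSubcomplexTerm_sup_range (hN : ∀ i ≥ N, IsZero (K.X i))
    (hAcycles : ∀ i, LinearMap.ker (K.d i (i + 1)).hom ≤ A i ⊔ LinearMap.range (K.d (i - 1) i).hom)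
    (i : ℤ) : LinearMap.ker (K.d (i + 1) (i + 1 + 1)).hom ≤
      (fgSubcomplexTerm K N A hA (i + 1)).1 ⊔ LinearMap.range (K.d i (i + 1)).hom := by
  by_cases h : N ≤ i + 1
  · have := ModuleCat.isZero_iff_subsingleton.mp (hN _ h)
    intro x _
    rw [Subsingleton.elim x 0]
    exact zero_mem _
  obtain ⟨C, hT, -⟩ := fgSubcomplexTerm_of_lt K N A hA (not_le.mp h)
  have := hAcycles (i + 1)
  rw [add_sub_cancel_right] at this
  rw [hT]
  exact this.trans (sup_le_sup_right le_sup_left _)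

lemma inf_range_le_map_fgSubcomplexTerm (i : ℤ) :
    (fgSubcomplexTerm K N A hA (i + 1)).1 ⊓ LinearMap.range (K.d i (i + 1)).hom ≤
      (fgSubcomplexTerm K N A hA i).1.map (K.d i (i + 1)).hom := by
  by_cases h : N ≤ i
  · simp [fgSubcomplexTerm_of_le K N A hA (h.trans (Int.le_add_one le_rfl))]
  obtain ⟨C, hT, hC⟩ := fgSubcomplexTerm_of_lt K N A hA (not_le.mp h)
  rw [hT, ← hC]
  exact Submodule.map_mono le_sup_right

end FGSubcomplex

end CochainComplex

/-- Let `R` be Noetherian and `F•` a bounded-above cochain complex of `R`-modules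
with finitely generated cohomology. Then `F•` contains a subcomplex with finitely
generated terms such that the inclusion is a quasi-isomorphism. -/
theorem stmt_7 (R : Type) [CommRing R] [IsNoetherianRing R]
    (K : CochainComplex (ModuleCat R) ℤ)
    (hbdd : ∃ N : ℤ, ∀ i ≥ N, IsZero (K.X i))
    (hfg : ∀ i : ℤ, Module.Finite R (K.homology i)) :
    ∃ (G : CochainComplex (ModuleCat R) ℤ) (φ : G ⟶ K),
      (∀ i, Module.Finite R (G.X i)) ∧ (∀ i, Function.Injective (φ.f i)) ∧
      QuasiIso φ := by
  obtain ⟨N, hN⟩ := hbdd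
  choose A hAfg hAker hAcycles using fun i ↦ have := hfg i; K.exists_fg_le_ker_sup_range i
  let M i := (K.fgSubcomplexTerm N A hAfg i).1
  have hM : ∀ i, M i ≤ (M (i + 1)).comap (K.d i (i + 1)).hom :=
    K.fgSubcomplexTerm_le_comap N A hAfg hAker
  refine ⟨K.ofSubmodules M hM, K.ofSubmodulesι M hM,
    fun i ↦ Module.Finite.iff_fg.mpr (K.fgSubcomplexTerm N A hAfg i).2,
    K.ofSubmodulesι_f_injective M hM, K.quasiIso_ofSubmodulesι M hM ?_ ?_⟩
  · exact K.ker_le_fgSubcomplexTerm_sup_range N A hAfg hN hAcycles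
  · exact K.inf_range_le_map_fgSubcomplexTerm N A hAfg
end

section
/- Let D be a triangulated category carrying two t-structures, with truncation functors τ⁻ and τ⁺ and aisles (D^{−,≤n}, D^{−,≥n}) and (D^{+,≤n}, D^{+,≥n}) respectively. Assume D^{−,≥2} ⊆ D^{+,≥0}. Then for every object F ∈ D, the object τ⁻_{≤0}(τ⁺_{≥0} F) lies in D^{−,≤0} ∩ D^{+,≥0}. -/
open CategoryTheory CategoryTheory.Limits CategoryTheory.Pretriangulated

/-- Let `t₁`, `t₂` be two t-structures on a triangulated category with
`D^{1,≥2} ⊆ D^{2,≥0}`. Given `F`, let `F₁ = τ²_{≥0} F` (via the truncation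
triangle `A → F → F₁` with `A ∈ D^{2,≤-1}`, `F₁ ∈ D^{2,≥0}`) and let
`G = τ¹_{≤0} F₁` (via the truncation triangle `G → F₁ → B` with `G ∈ D^{1,≤0}`,
`B ∈ D^{1,≥1}`). Then `G = τ¹_{≤0} τ²_{≥0} F` lies in `D^{1,≤0} ∩ D^{2,≥0}`. -/
theorem stmt_11 {C : Type*} [Category C] [Preadditive C] [HasZeroObject C]
    [HasShift C ℤ] [∀ n : ℤ, (shiftFunctor C n).Additive] [Pretriangulated C]
    (t₁ t₂ : Triangulated.TStructure C)
    (h12 : ∀ X : C, t₁.ge 2 X → t₂.ge 0 X)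
    (F F₁ G A B : C)
    (hA : t₂.le (-1) A) (hF₁ : t₂.ge 0 F₁)
    (f₁ : A ⟶ F) (g₁ : F ⟶ F₁) (d₁ : F₁ ⟶ A⟦(1 : ℤ)⟧)
    (hT₁ : Triangle.mk f₁ g₁ d₁ ∈ distTriang C)
    (hG : t₁.le 0 G) (hB : t₁.ge 1 B)
    (f₂ : G ⟶ F₁) (g₂ : F₁ ⟶ B) (d₂ : B ⟶ G⟦(1 : ℤ)⟧)
    (hT₂ : Triangle.mk f₂ g₂ d₂ ∈ distTriang C) :
    t₁.le 0 G ∧ t₂.ge 0 G := by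
  have hB' : t₂.IsGE (B⟦(-1 : ℤ)⟧) 0 := ⟨h12 _ (t₁.ge_shift 1 (-1) 2 (by norm_num) B hB)⟩
  have hG' : t₂.IsGE G 0 := t₂.isGE₂ _ (inv_rot_of_distTriang _ hT₂) 0 hB' ⟨hF₁⟩
  exact ⟨hG, hG'.ge⟩
end

section
/- Let (R, m) be a Noetherian local ring, I ⊆ m an ideal, and let M• be a bounded-below complex of R-modules all of whose cohomology modules are torsion (every element killed by a power of m). If n = inf{i : H^i(M•) ≠ 0} is finite, then inf{i : H^i(RHom_R(R/I, M•)) ≠ 0} = n; in particular, RHom_R(R/I, M•) ∈ D^{≥ n} if and only if M• ∈ D^{≥ n}. -/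
/-!
`K` is a bounded-below complex of injectives that is exact below degree `n`, so by induction the
cycles `Zⁱ = Bⁱ` are injective for `i < n`: `Bⁱ ≅ Kⁱ⁻¹ ⧸ Zⁱ⁻¹` is a direct summand of `Kⁱ⁻¹`
because `Zⁱ⁻¹` is injective. Hence `K` splits in degrees `< n`, `Hom(R/I, -)` keeps it exact
there, and `Bⁿ` is injective too. By Baer's criterion a class of `Hⁿ` killed by `I` is then
represented by a cycle killed by `I`, i.e. by a cocycle of `Hom(R/I, K)`, which is a coboundary
only if the class vanishes. A nonzero such class exists because `Hⁿ ≠ 0` is `𝔪`-power torsion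
and `I ⊆ 𝔪`.
-/

open CategoryTheory CategoryTheory.Limits

section ModuleLemmas

universe u v

variable {R : Type u} [CommRing R] {M N : Type v} [AddCommGroup M] [Module R M]
  [AddCommGroup N] [Module R N]

open LinearMap

theorem Module.Injective.of_subsingleton [Subsingleton M] : Module.Injective R M where
  out _ _ _ _ _ _ _ _ _ := ⟨0, fun _ => Subsingleton.elim _ _⟩

theorem Module.Injective.of_leftInverse (hM : Module.Injective R M) (p : M →ₗ[R] N)
    (s : N →ₗ[R] M) (hps : Function.LeftInverse p s) : Module.Injective R N where
  out _ _ _ _ _ _ f hf g := by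
    obtain ⟨h, hh⟩ := hM.out f hf (s ∘ₗ g)
    exact ⟨p ∘ₗ h, fun x => by simp [hh x, hps _]⟩

theorem LinearMap.exists_rightInverse_of_injective_ker (f : M →ₗ[R] N)
    (hf : Function.Surjective f) (hker : Module.Injective R (ker f)) :
    ∃ s : N →ₗ[R] M, Function.RightInverse s f := by
  obtain ⟨r, hr⟩ := hker.out (ker f).subtype (ker f).injective_subtype LinearMap.id
  let q : M →ₗ[R] M := LinearMap.id - (ker f).subtype ∘ₗ r
  have hq : ker f ≤ ker q := fun x hx => by simp [q, show r x = ⟨x, hx⟩ from hr ⟨x, hx⟩]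
  refine ⟨(ker f).liftQ q hq ∘ₗ (f.quotKerEquivOfSurjective hf).symm, fun y => ?_⟩
  obtain ⟨x, rfl⟩ := hf y
  simp [q, quotKerEquivOfSurjective_symm_apply]

theorem LinearMap.injective_range_of_injective_ker (f : M →ₗ[R] N) (hM : Module.Injective R M)
    (hker : Module.Injective R (ker f)) : Module.Injective R (range f) := by
  rw [← ker_rangeRestrict] at hker
  obtain ⟨s, hs⟩ := f.rangeRestrict.exists_rightInverse_of_injective_ker
    f.surjective_rangeRestrict hker
  exact hM.of_leftInverse f.rangeRestrict s hs

theorem Module.Baer.exists_mem_smul_eq_smul {B : Submodule R M} (hB : Module.Baer R B)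
    {I : Ideal R} {z : M} (hz : ∀ a ∈ I, a • z ∈ B) : ∃ b ∈ B, ∀ a ∈ I, a • z = a • b := by
  obtain ⟨g, hg⟩ := hB I ((LinearMap.toSpanSingleton R M z).restrict fun a ha => hz a ha)
  refine ⟨g 1, (g 1).2, fun a ha => ?_⟩
  calc a • z = g a := (congrArg Subtype.val (hg a ha)).symm
    _ = ↑(a • g 1) := by rw [← map_smul, smul_eq_mul, mul_one]
    _ = a • g 1 := Submodule.coe_smul a (g 1)

theorem exists_ne_zero_forall_smul_eq_zero_of_pow {J : Ideal R} {x : M} (hx : x ≠ 0) (k : ℕ)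
    (hk : ∀ a ∈ J ^ k, a • x = 0) : ∃ y : M, y ≠ 0 ∧ ∀ a ∈ J, a • y = 0 := by
  induction k generalizing x with
  | zero => exact absurd (by simpa using hk 1) hx
  | succ k ih =>
    by_cases hJ : ∀ a ∈ J, a • x = 0
    · exact ⟨x, hx, hJ⟩
    push Not at hJ
    obtain ⟨a, ha, hax⟩ := hJ
    refine ih hax fun b hb => ?_
    rw [smul_smul]
    exact hk _ (by rw [pow_succ]; exact Ideal.mul_mem_mul hb ha)

end ModuleLemmas

section Complexes

universe u

variable {R : Type u} [CommRing R] {ι : Type*} {c : ComplexShape ι}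
  (K : HomologicalComplex (ModuleCat.{u} R) c)

open LinearMap

namespace HomologicalComplex

abbrev homComplex (P : ModuleCat.{u} R) : HomologicalComplex (ModuleCat.{u} R) c :=
  (((linearCoyoneda R (ModuleCat R)).obj (Opposite.op P)).mapHomologicalComplex c).obj K

theorem exists_cycle_smul_eq_zero_iff_mem_range {i j k : ι} (hi : c.prev j = i)
    (hk : c.next j = k) (x : K.homology j) :
    ∃ z : K.X j, K.d j k z = 0 ∧ ∀ a : R, a • x = 0 ↔ a • z ∈ range (K.d i j).hom := by
  let S := K.sc' i j k
  let e : K.homology j ≃ₗ[R] ker S.g.hom ⧸ range S.moduleCatToCycles :=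
    (K.homologyIsoSc' i j k hi hk ≪≫ S.moduleCatHomologyIso).toLinearEquiv
  obtain ⟨⟨z, hz⟩, hzx⟩ := Submodule.Quotient.mk_surjective _ (e x)
  refine ⟨z, hz, fun a => ?_⟩
  calc a • x = 0 ↔ e (a • x) = 0 := e.map_eq_zero_iff.symm
    _ ↔ Submodule.Quotient.mk (a • (⟨z, hz⟩ : ker S.g.hom)) = 0 := by
      rw [map_smul, ← hzx, Submodule.Quotient.mk_smul]
    _ ↔ a • ⟨z, hz⟩ ∈ range S.moduleCatToCycles := Submodule.Quotient.mk_eq_zero _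
    _ ↔ a • z ∈ range (K.d i j).hom := exists_congr fun _ => Subtype.ext_iff

theorem exactAt_homComplex_of_injective_ker (P : ModuleCat.{u} R) {i j : ι} (hi : c.prev j = i)
    (hK : K.ExactAt j) (hker : Module.Injective R (ker (K.d i j).hom)) :
    (K.homComplex P).ExactAt j := by
  rw [exactAt_iff' _ i j (c.next j) hi rfl, ShortComplex.moduleCat_exact_iff] at hK ⊢
  obtain ⟨s, hs⟩ := (K.d i j).hom.rangeRestrict.exists_rightInverse_of_injective_ker
    (K.d i j).hom.surjective_rangeRestrict (by rwa [ker_rangeRestrict])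
  intro (φ : P ⟶ K.X j) (hφ : φ ≫ K.d j _ = 0)
  have hφ' : ∀ v, φ v ∈ range (K.d i j).hom := fun v => hK (φ v) congr($hφ v)
  refine ⟨ModuleCat.ofHom (s ∘ₗ φ.hom.codRestrict _ hφ'),
    ModuleCat.hom_ext (LinearMap.ext fun v => ?_)⟩
  exact congrArg Subtype.val (hs ⟨φ v, hφ' v⟩)

theorem mem_range_of_exactAt_homComplex_quotient (I : Ideal R) {i j k : ι} (hi : c.prev j = i)
    (hk : c.next j = k) (hL : (K.homComplex (ModuleCat.of R (R ⧸ I))).ExactAt j)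
    {z : K.X j} (hz : K.d j k z = 0) (hzI : ∀ a ∈ I, a • z = 0) :
    z ∈ range (K.d i j).hom := by
  rw [exactAt_iff' _ i j k hi hk, ShortComplex.moduleCat_exact_iff] at hL
  let φ₀ : R ⧸ I →ₗ[R] K.X j :=
    I.liftQ (toSpanSingleton R (K.X j) z) fun a ha => mem_ker.2 (hzI a ha)
  let φ : ModuleCat.of R (R ⧸ I) ⟶ K.X j := ModuleCat.ofHom φ₀
  have hφ1 : φ 1 = z := by
    change φ₀ (Submodule.Quotient.mk 1) = z
    rw [Submodule.liftQ_apply, toSpanSingleton_apply, one_smul]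
  have hφ : φ ≫ K.d j k = 0 := by
    ext
    simp [hφ1, hz]
  obtain ⟨(ψ : ModuleCat.of R (R ⧸ I) ⟶ K.X i), (hψ : ψ ≫ K.d i j = φ)⟩ := hL φ hφ
  exact ⟨ψ 1, by simpa [hφ1] using congr($hψ 1)⟩

theorem not_exactAt_homComplex_quotient (I : Ideal R) {i j k : ι} (hi : c.prev j = i)
    (hk : c.next j = k) (hB : Module.Baer R (range (K.d i j).hom)) {x : K.homology j}
    (hx : x ≠ 0) (hxI : ∀ a ∈ I, a • x = 0) :
    ¬ (K.homComplex (ModuleCat.of R (R ⧸ I))).ExactAt j := by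
  intro hL
  obtain ⟨z, hz, hzx⟩ := K.exists_cycle_smul_eq_zero_iff_mem_range hi hk x
  obtain ⟨b, ⟨w, rfl⟩, hbz⟩ := hB.exists_mem_smul_eq_smul fun a ha => (hzx a).1 (hxI a ha)
  have hcycle : K.d j k (z - K.d i j w) = 0 := by
    rw [map_sub, hz, show K.d j k (K.d i j w) = 0 from (K.sc' i j k).moduleCat_zero_apply w,
      sub_zero]
  have hbound := K.mem_range_of_exactAt_homComplex_quotient I hi hk hL hcycle
    fun a ha => by rw [smul_sub, hbz a ha, sub_self]
  exact hx (by simpa using (hzx 1).2 (by simpa using add_mem hbound ⟨w, rfl⟩))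

end HomologicalComplex

theorem CochainComplex.injective_ker_d_of_exactAt (K : CochainComplex (ModuleCat.{u} R) ℤ)
    (hinj : ∀ i, Module.Injective R (K.X i)) (hbdd : ∃ N : ℤ, ∀ i ≤ N, IsZero (K.X i)) {n : ℤ}
    (hexact : ∀ i < n, K.ExactAt i) {i j : ℤ} (hij : i + 1 = j) (hi : i < n) :
    Module.Injective R (ker (K.d i j).hom) := by
  subst hij
  obtain ⟨N, hN⟩ := hbdd
  have base : ∀ i ≤ N, Module.Injective R (ker (K.d i (i + 1)).hom) := fun i hi =>
    have := ModuleCat.subsingleton_of_isZero (hN i hi)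
    Module.Injective.of_subsingleton
  rcases le_total i N with hiN | hNi
  · exact base i hiN
  induction i, hNi using Int.leInduction with
  | base => exact base N le_rfl
  | succ i _ ih =>
    have hrange : range (K.d i (i + 1)).hom = ker (K.d (i + 1) (i + 1 + 1)).hom :=
      ((K.exactAt_iff' i (i + 1) (i + 1 + 1) (by simp) (by simp)).1
        (hexact (i + 1) hi)).moduleCat_range_eq_ker
    rw [← hrange]
    exact (K.d i (i + 1)).hom.injective_range_of_injective_ker (hinj i) (ih (by omega))

end Complexes

theorem stmt_18_general (R : Type) [CommRing R] [IsLocalRing R]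
    (I : Ideal R) (hI : I ≤ IsLocalRing.maximalIdeal R)
    (K : CochainComplex (ModuleCat R) ℤ)
    (hinj : ∀ i, Module.Injective R (K.X i))
    (hbdd : ∃ N : ℤ, ∀ i ≤ N, IsZero (K.X i))
    (htors : ∀ (i : ℤ) (x : K.homology i), ∃ n : ℕ,
      ∀ a ∈ (IsLocalRing.maximalIdeal R) ^ n, a • x = 0)
    (n : ℤ) (hn : ¬ IsZero (K.homology n))
    (hbot : ∀ i < n, IsZero (K.homology i)) :
    ¬ IsZero (((((linearCoyoneda R (ModuleCat R)).obj
        (Opposite.op (ModuleCat.of R (R ⧸ I)))).mapHomologicalComplex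
        (ComplexShape.up ℤ)).obj K).homology n) ∧
    ∀ i < n, IsZero (((((linearCoyoneda R (ModuleCat R)).obj
        (Opposite.op (ModuleCat.of R (R ⧸ I)))).mapHomologicalComplex
        (ComplexShape.up ℤ)).obj K).homology i) := by
  have hexact : ∀ i < n, K.ExactAt i := fun i hi => (K.exactAt_iff_isZero_homology i).2 (hbot i hi)
  have hker : ∀ i ≤ n, Module.Injective R (LinearMap.ker (K.d (i - 1) i).hom) := fun i hi =>
    K.injective_ker_d_of_exactAt hinj hbdd hexact (by omega) (by omega)
  refine ⟨fun hL => ?_, fun i hi => ?_⟩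
  · rw [ModuleCat.isZero_iff_subsingleton, not_subsingleton_iff_nontrivial] at hn
    obtain ⟨x, hx⟩ := exists_ne (0 : K.homology n)
    obtain ⟨k, hk⟩ := htors n x
    obtain ⟨y, hy, hym⟩ := exists_ne_zero_forall_smul_eq_zero_of_pow hx k hk
    have hB : Module.Baer R (LinearMap.range (K.d (n - 1) n).hom) :=
      .of_injective <| (K.d _ n).hom.injective_range_of_injective_ker (hinj _) (hker n le_rfl)
    exact K.not_exactAt_homComplex_quotient I (k := n + 1) (by simp) (by simp) hB hy
      (fun a ha => hym a (hI ha)) ((HomologicalComplex.exactAt_iff_isZero_homology _ n).2 hL)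
  · rw [← HomologicalComplex.exactAt_iff_isZero_homology]
    exact K.exactAt_homComplex_of_injective_ker _ (by simp) (hexact i hi) (hker i hi.le)

/-- Let `(R, m)` be Noetherian local, `I ⊆ m`, and `M•` a bounded-below complex
of injective `R`-modules with torsion cohomology (so `Hom(R/I, M•)` computes
`RHom(R/I, M•)`). If the lowest nonvanishing cohomology of `M•` is in degree
`n`, then so is that of `RHom_R(R/I, M•)`. -/
theorem stmt_18 (R : Type) [CommRing R] [IsNoetherianRing R] [IsLocalRing R]
    (I : Ideal R) (hI : I ≤ IsLocalRing.maximalIdeal R)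
    (K : CochainComplex (ModuleCat R) ℤ)
    (hinj : ∀ i, Module.Injective R (K.X i))
    (hbdd : ∃ N : ℤ, ∀ i ≤ N, IsZero (K.X i))
    (htors : ∀ (i : ℤ) (x : K.homology i), ∃ n : ℕ,
      ∀ a ∈ (IsLocalRing.maximalIdeal R) ^ n, a • x = 0)
    (n : ℤ) (hn : ¬ IsZero (K.homology n))
    (hbot : ∀ i < n, IsZero (K.homology i)) :
    ¬ IsZero (((((linearCoyoneda R (ModuleCat R)).obj
        (Opposite.op (ModuleCat.of R (R ⧸ I)))).mapHomologicalComplex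
        (ComplexShape.up ℤ)).obj K).homology n) ∧
    ∀ i < n, IsZero (((((linearCoyoneda R (ModuleCat R)).obj
        (Opposite.op (ModuleCat.of R (R ⧸ I)))).mapHomologicalComplex
        (ComplexShape.up ℤ)).obj K).homology i) :=
  stmt_18_general R I hI K hinj hbdd htors n hn hbot
end
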